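/- Let N, m, s ∈ ℕ, let M be a real m × N matrix, let L : ℝ^N → ℝ^N be an injective linear map, and let c ∈ ℝ^N with c_i ≠ 0 for all i. Let f ∈ ℝ^N satisfy f_i ≥ 0 for all i, define h ∈ ℝ^N by h_i = c_i² (Lf)_i, and assume h has at most s nonzero entries. Assume M satisfies the restricted isometry property of order 2s with constant δ < 1/√2. Set y := Mf and y'' := Mh. Then (f, h) is the unique solution of the joint reconstruction problem with data (y, y''): the pair (f, h) is feasible, and every feasible pair (f', h') with ‖h'‖₁ ≤ ‖h‖₁ satisfies f' = f and h' = h. -/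
import Mathlib


/-- A vector `z ∈ ℝ^n` is `s`-sparse: it has at most `s` nonzero entries. -/
def Sparse {n : ℕ} (s : ℕ) (z : Fin n → ℝ) : Prop :=
  ∃ S : Finset (Fin n), S.card ≤ s ∧ ∀ i ∉ S, z i = 0

/-- The ℓ¹-norm on ℝ^n: the sum of the absolute values of the entries. -/
noncomputable def l1 {n : ℕ} (z : Fin n → ℝ) : ℝ := ∑ i, |z i|

/-- The squared Euclidean (ℓ²) norm on ℝ^n. -/
def sq2 {n : ℕ} (z : Fin n → ℝ) : ℝ := ∑ i, z i ^ 2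

/-- Feasibility for the joint reconstruction problem with data `(y, y'')`:
`f'` is nonnegative, `M f' = y`, `M h' = y''`, and `c² (L f') = h'`. -/
def Feasible {N m : ℕ} (M : Matrix (Fin m) (Fin N) ℝ)
    (L : (Fin N → ℝ) →ₗ[ℝ] (Fin N → ℝ)) (c : Fin N → ℝ)
    (y y'' : Fin m → ℝ) (f' h' : Fin N → ℝ) : Prop :=
  (∀ i, 0 ≤ f' i) ∧ M.mulVec f' = y ∧ M.mulVec h' = y'' ∧
    (∀ i, c i ^ 2 * L f' i = h' i)

set_option maxHeartbeats 1000000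

open Finset in
lemma quad_disc {a b c : ℝ} (H : ∀ p q : ℝ, 0 ≤ a*p^2 + 2*b*p*q + c*q^2) : b^2 ≤ a*c := by
  have ha : 0 ≤ a := by have := H 1 0; linarith
  have hc : 0 ≤ c := by have := H 0 1; linarith
  rcases eq_or_lt_of_le ha with h | h
  · have hb : b = 0 := by
      by_contra hb
      have h2 := H (-(c+1)/(2*b)) 1
      rw [← h] at h2
      have h3 : 2*b*(-(c+1)/(2*b)) = -(c+1) := by field_simp
      nlinarith [h2, h3]
    rw [hb, ← h]; simp
  · have h2 := H (-b) a
    nlinarith [h2, h]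

lemma sq2_expand {n : ℕ} (p q : ℝ) (x u : Fin n → ℝ) :
    sq2 (fun i => p * x i + q * u i)
      = p^2 * sq2 x + 2*p*q*(∑ i, x i * u i) + q^2 * sq2 u := by
  simp only [sq2, Finset.mul_sum, ← Finset.sum_add_distrib]
  exact Finset.sum_congr rfl (fun i _ => by ring)

lemma mulVec_comb {m n : ℕ} (M : Matrix (Fin m) (Fin n) ℝ) (p q : ℝ) (x u : Fin n → ℝ) :
    M.mulVec (fun i => p * x i + q * u i) = fun r => p * M.mulVec x r + q * M.mulVec u r := by
  funext r
  simp only [Matrix.mulVec, dotProduct, Finset.mul_sum, ← Finset.sum_add_distrib]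
  exact Finset.sum_congr rfl (fun i _ => by ring)

lemma sq2_nonneg {n : ℕ} (z : Fin n → ℝ) : 0 ≤ sq2 z :=
  Finset.sum_nonneg (fun i _ => sq_nonneg _)

lemma sq2_eq_zero {n : ℕ} {z : Fin n → ℝ} (h : sq2 z ≤ 0) : z = 0 := by
  funext i
  have h2 : ∀ i ∈ Finset.univ, (0:ℝ) ≤ z i ^ 2 := fun i _ => sq_nonneg _
  have := (Finset.sum_eq_zero_iff_of_nonneg h2).mp (le_antisymm h (sq2_nonneg z)) i (Finset.mem_univ i)
  exact pow_eq_zero_iff (by norm_num) |>.mp this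

open Finset in
lemma polytope_nonneg {n : ℕ} (s : ℕ) (α : ℝ) (hα : 0 < α) :
    ∀ (μ : ℕ) (v : Fin n → ℝ), (∀ i, 0 ≤ v i) → (∀ i, v i ≤ α) →
      (∑ i, v i) ≤ s * α →
      2 * (univ.filter (fun i => v i ≠ 0)).card
        + (univ.filter (fun i => v i ≠ 0 ∧ v i ≠ α)).card ≤ μ →
      ∃ (k : ℕ) (lam : Fin k → ℝ) (u : Fin k → Fin n → ℝ),
        (∀ j, 0 ≤ lam j) ∧ (∑ j, lam j) = 1 ∧
        (∀ i, ∑ j, lam j * u j i = v i) ∧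
        (∀ j, Sparse s (u j)) ∧ (∀ j i, 0 ≤ u j i) ∧ (∀ j i, u j i ≤ α) ∧
        (∀ j i, v i = 0 → u j i = 0) := by
  intro μ
  induction μ with
  | zero =>
    intro v h0 h1 hsum hμ
    refine ⟨1, fun _ => 1, fun _ => v, fun _ => one_pos.le, by simp, fun i => by simp, ?_,
      fun _ i => h0 i, fun _ i => h1 i, fun _ i hi => hi⟩
    intro _
    refine ⟨univ.filter (fun i => v i ≠ 0), ?_, fun i hi => by simpa using hi⟩
    omega
  | succ μ ih =>
    intro v h0 h1 hsum hμ
    by_cases hcard : (univ.filter (fun i => v i ≠ 0)).card ≤ s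
    · exact ⟨1, fun _ => 1, fun _ => v, fun _ => one_pos.le, by simp, fun i => by simp,
        fun _ => ⟨univ.filter (fun i => v i ≠ 0), hcard, fun i hi => by simpa using hi⟩,
        fun _ i => h0 i, fun _ i => h1 i, fun _ i hi => hi⟩
    · push_neg at hcard
      set Supp := univ.filter (fun i => v i ≠ 0) with hSupp
      set Uns := univ.filter (fun i => v i ≠ 0 ∧ v i ≠ α) with hUns
      set Sat := univ.filter (fun i => v i = α) with hSat
      have hSatsum : (Sat.card : ℝ) * α = ∑ i ∈ Sat, v i := by
        rw [Finset.sum_congr rfl (fun i hi => by simpa [hSat] using (mem_filter.mp hi).2)]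
        simp [mul_comm]
      have hSatcard : (Sat.card : ℝ) * α ≤ s * α := by
        have e2 : ∑ i ∈ Sat, v i ≤ ∑ i, v i :=
          Finset.sum_le_sum_of_subset_of_nonneg (subset_univ _) (fun i _ _ => h0 i)
        linarith
      have hSatcard' : Sat.card ≤ s := by
        have := le_of_mul_le_mul_right (by linarith : (Sat.card:ℝ) * α ≤ (s:ℝ) * α) hα
        exact_mod_cast this
      have hsub : Supp ⊆ Sat ∪ Uns := by
        intro i hi
        rw [mem_union]
        rcases eq_or_ne (v i) α with h | h
        · exact Or.inl (by simp [hSat, h])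
        · exact Or.inr (by simp [hUns, h, (mem_filter.mp hi).2])
      have hUns2 : 2 ≤ Uns.card := by
        by_contra hU
        push_neg at hU
        have hcards : Supp.card ≤ Sat.card + Uns.card :=
          le_trans (card_le_card hsub) (card_union_le _ _)
        interval_cases hc : Uns.card
        · omega
        · obtain ⟨j, hj⟩ := Finset.card_eq_one.mp hc
          have hjU : j ∈ Uns := by simp [hj]
          have hjv : v j ≠ 0 ∧ v j ≠ α := by simpa [hUns] using hjU
          have hjpos : 0 < v j := lt_of_le_of_ne (h0 j) (Ne.symm hjv.1)
          have hSatS : Sat.card = s := by omega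
          have hjS : j ∉ Sat := by simp [hSat, hjv.2]
          have e1 : ∑ i ∈ insert j Sat, v i ≤ ∑ i, v i :=
            Finset.sum_le_sum_of_subset_of_nonneg (subset_univ _) (fun i _ _ => h0 i)
          rw [Finset.sum_insert hjS] at e1
          rw [hSatS] at hSatsum
          linarith
      obtain ⟨j, hjU, k, hkU, hjk⟩ := Finset.one_lt_card.mp (by omega : 1 < Uns.card)
      have hjv : v j ≠ 0 ∧ v j ≠ α := by simpa [hUns] using hjU
      have hkv : v k ≠ 0 ∧ v k ≠ α := by simpa [hUns] using hkU
      have hj0 : 0 < v j := lt_of_le_of_ne (h0 j) (Ne.symm hjv.1)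
      have hjα : v j < α := lt_of_le_of_ne (h1 j) hjv.2
      have hk0 : 0 < v k := lt_of_le_of_ne (h0 k) (Ne.symm hkv.1)
      have hkα : v k < α := lt_of_le_of_ne (h1 k) hkv.2
      set t := min (α - v j) (v k) with ht
      set t' := min (v j) (α - v k) with ht'
      have htpos : 0 < t := lt_min (by linarith) hk0
      have ht'pos : 0 < t' := lt_min hj0 (by linarith)
      have htub1 : t ≤ α - v j := min_le_left _ _
      have htub2 : t ≤ v k := min_le_right _ _
      have ht'ub1 : t' ≤ v j := min_le_left _ _
      have ht'ub2 : t' ≤ α - v k := min_le_right _ _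
      set vp : Fin n → ℝ := fun i => if i = j then v j + t else if i = k then v k - t else v i
        with hvp
      set vm : Fin n → ℝ := fun i => if i = j then v j - t' else if i = k then v k + t' else v i
        with hvm
      have hkj : k ≠ j := Ne.symm hjk
      have hvpj : vp j = v j + t := by simp [hvp]
      have hvpk : vp k = v k - t := by simp [hvp, hkj]
      have hvmj : vm j = v j - t' := by simp [hvm]
      have hvmk : vm k = v k + t' := by simp [hvm, hkj]
      have hvpo : ∀ i, i ≠ j → i ≠ k → vp i = v i := fun i hij hik => by simp [hvp, hij, hik]
      have hvmo : ∀ i, i ≠ j → i ≠ k → vm i = v i := fun i hij hik => by simp [hvm, hij, hik]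
      have hvp0 : ∀ i, 0 ≤ vp i := by
        intro i
        by_cases hij : i = j
        · subst hij; rw [hvpj]; linarith
        · by_cases hik : i = k
          · subst hik; rw [hvpk]; linarith
          · rw [hvpo i hij hik]; exact h0 i
      have hvp1 : ∀ i, vp i ≤ α := by
        intro i
        by_cases hij : i = j
        · subst hij; rw [hvpj]; linarith
        · by_cases hik : i = k
          · subst hik; rw [hvpk]; linarith
          · rw [hvpo i hij hik]; exact h1 i
      have hvm0 : ∀ i, 0 ≤ vm i := by
        intro i
        by_cases hij : i = j
        · subst hij; rw [hvmj]; linarith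
        · by_cases hik : i = k
          · subst hik; rw [hvmk]; linarith
          · rw [hvmo i hij hik]; exact h0 i
      have hvm1 : ∀ i, vm i ≤ α := by
        intro i
        by_cases hij : i = j
        · subst hij; rw [hvmj]; linarith
        · by_cases hik : i = k
          · subst hik; rw [hvmk]; linarith
          · rw [hvmo i hij hik]; exact h1 i
      have hdiff_p : ∀ i, vp i = v i + ((if i = j then t else 0) + (if i = k then -t else 0)) := by
        intro i
        by_cases hij : i = j
        · subst hij; rw [hvpj]; simp [hjk]
        · by_cases hik : i = k
          · subst hik; rw [hvpk]; simp [hij]; ring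
          · rw [hvpo i hij hik]; simp [hij, hik]
      have hdiff_m : ∀ i, vm i = v i + ((if i = j then -t' else 0) + (if i = k then t' else 0)) := by
        intro i
        by_cases hij : i = j
        · subst hij; rw [hvmj]; simp [hjk]; ring
        · by_cases hik : i = k
          · subst hik; rw [hvmk]; simp [hij]
          · rw [hvmo i hij hik]; simp [hij, hik]
      have hsum_p : ∑ i, vp i = ∑ i, v i := by
        rw [Finset.sum_congr rfl (fun i _ => hdiff_p i), Finset.sum_add_distrib,
          Finset.sum_add_distrib]
        simp [Finset.sum_ite_eq']
      have hsum_m : ∑ i, vm i = ∑ i, v i := by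
        rw [Finset.sum_congr rfl (fun i _ => hdiff_m i), Finset.sum_add_distrib,
          Finset.sum_add_distrib]
        simp [Finset.sum_ite_eq']
      have hsupp_p : univ.filter (fun i => vp i ≠ 0) ⊆ Supp := by
        intro i hi
        rw [mem_filter] at hi
        rw [hSupp, mem_filter]
        refine ⟨mem_univ _, ?_⟩
        by_cases hij : i = j
        · subst hij; exact hjv.1
        · by_cases hik : i = k
          · subst hik; exact hkv.1
          · rw [hvpo i hij hik] at hi; exact hi.2
      have hsupp_m : univ.filter (fun i => vm i ≠ 0) ⊆ Supp := by
        intro i hi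
        rw [mem_filter] at hi
        rw [hSupp, mem_filter]
        refine ⟨mem_univ _, ?_⟩
        by_cases hij : i = j
        · subst hij; exact hjv.1
        · by_cases hik : i = k
          · subst hik; exact hkv.1
          · rw [hvmo i hij hik] at hi; exact hi.2
      have huns_p : univ.filter (fun i => vp i ≠ 0 ∧ vp i ≠ α) ⊆ Uns := by
        intro i hi
        rw [mem_filter] at hi
        rw [hUns, mem_filter]
        refine ⟨mem_univ _, ?_⟩
        by_cases hij : i = j
        · subst hij; exact hjv
        · by_cases hik : i = k
          · subst hik; exact hkv
          · rw [hvpo i hij hik] at hi; exact hi.2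
      have huns_m : univ.filter (fun i => vm i ≠ 0 ∧ vm i ≠ α) ⊆ Uns := by
        intro i hi
        rw [mem_filter] at hi
        rw [hUns, mem_filter]
        refine ⟨mem_univ _, ?_⟩
        by_cases hij : i = j
        · subst hij; exact hjv
        · by_cases hik : i = k
          · subst hik; exact hkv
          · rw [hvmo i hij hik] at hi; exact hi.2
      have hjSupp : j ∈ Supp := by simp [hSupp, hjv.1]
      have hkSupp : k ∈ Supp := by simp [hSupp, hkv.1]
      have hmeas_p : 2 * (univ.filter (fun i => vp i ≠ 0)).card
          + (univ.filter (fun i => vp i ≠ 0 ∧ vp i ≠ α)).card ≤ μ := by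
        have hc1 : (univ.filter (fun i => vp i ≠ 0 ∧ vp i ≠ α)).card ≤ Uns.card :=
          card_le_card huns_p
        rcases le_or_gt (v k) (α - v j) with hcase | hcase
        · have htk : t = v k := min_eq_right hcase
          have hss : univ.filter (fun i => vp i ≠ 0) ⊆ Supp.erase k := by
            intro i hi
            rw [mem_filter] at hi
            rw [mem_erase]
            refine ⟨?_, hsupp_p (by rw [mem_filter]; exact hi)⟩
            rintro rfl
            rw [hvpk, htk] at hi
            simp at hi
          have hc2 : (univ.filter (fun i => vp i ≠ 0)).card ≤ Supp.card - 1 := by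
            have := card_le_card hss
            rwa [card_erase_of_mem hkSupp] at this
          have h1le : 1 ≤ Supp.card := card_pos.mpr ⟨k, hkSupp⟩
          omega
        · have htj : t = α - v j := min_eq_left hcase.le
          have hss : univ.filter (fun i => vp i ≠ 0 ∧ vp i ≠ α) ⊆ Uns.erase j := by
            intro i hi
            rw [mem_filter] at hi
            rw [mem_erase]
            refine ⟨?_, huns_p (by rw [mem_filter]; exact hi)⟩
            rintro rfl
            rw [hvpj, htj] at hi
            simp at hi
          have hc2 : (univ.filter (fun i => vp i ≠ 0 ∧ vp i ≠ α)).card ≤ Uns.card - 1 := by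
            have := card_le_card hss
            rwa [card_erase_of_mem hjU] at this
          have hc3 : (univ.filter (fun i => vp i ≠ 0)).card ≤ Supp.card :=
            card_le_card hsupp_p
          omega
      have hmeas_m : 2 * (univ.filter (fun i => vm i ≠ 0)).card
          + (univ.filter (fun i => vm i ≠ 0 ∧ vm i ≠ α)).card ≤ μ := by
        have hc1 : (univ.filter (fun i => vm i ≠ 0 ∧ vm i ≠ α)).card ≤ Uns.card :=
          card_le_card huns_m
        rcases le_or_gt (v j) (α - v k) with hcase | hcase
        · have htk : t' = v j := min_eq_left hcase
          have hss : univ.filter (fun i => vm i ≠ 0) ⊆ Supp.erase j := by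
            intro i hi
            rw [mem_filter] at hi
            rw [mem_erase]
            refine ⟨?_, hsupp_m (by rw [mem_filter]; exact hi)⟩
            rintro rfl
            rw [hvmj, htk] at hi
            simp at hi
          have hc2 : (univ.filter (fun i => vm i ≠ 0)).card ≤ Supp.card - 1 := by
            have := card_le_card hss
            rwa [card_erase_of_mem hjSupp] at this
          have h1le : 1 ≤ Supp.card := card_pos.mpr ⟨j, hjSupp⟩
          omega
        · have htj : t' = α - v k := min_eq_right hcase.le
          have hss : univ.filter (fun i => vm i ≠ 0 ∧ vm i ≠ α) ⊆ Uns.erase k := by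
            intro i hi
            rw [mem_filter] at hi
            rw [mem_erase]
            refine ⟨?_, huns_m (by rw [mem_filter]; exact hi)⟩
            rintro rfl
            rw [hvmk, htj] at hi
            simp at hi
          have hc2 : (univ.filter (fun i => vm i ≠ 0 ∧ vm i ≠ α)).card ≤ Uns.card - 1 := by
            have := card_le_card hss
            rwa [card_erase_of_mem hkU] at this
          have hc3 : (univ.filter (fun i => vm i ≠ 0)).card ≤ Supp.card :=
            card_le_card hsupp_m
          omega
      obtain ⟨k1, lam1, u1, hl1nn, hl1sum, hcomb1, hsp1, hu1nn, hu1ub, hu1supp⟩ :=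
        ih vp hvp0 hvp1 (by rw [hsum_p]; exact hsum) hmeas_p
      obtain ⟨k2, lam2, u2, hl2nn, hl2sum, hcomb2, hsp2, hu2nn, hu2ub, hu2supp⟩ :=
        ih vm hvm0 hvm1 (by rw [hsum_m]; exact hsum) hmeas_m
      have htt : 0 < t + t' := by linarith
      set c1 : ℝ := t' / (t + t') with hc1def
      set c2 : ℝ := t / (t + t') with hc2def
      have hc1nn : 0 ≤ c1 := div_nonneg ht'pos.le htt.le
      have hc2nn : 0 ≤ c2 := div_nonneg htpos.le htt.le
      have hc12 : c1 + c2 = 1 := by rw [hc1def, hc2def]; field_simp; ring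
      refine ⟨k1 + k2, Fin.append (fun a => c1 * lam1 a) (fun a => c2 * lam2 a),
        Fin.append u1 u2, ?_, ?_, ?_, ?_, ?_, ?_, ?_⟩
      · intro a
        refine Fin.addCases (fun b => ?_) (fun b => ?_) a
        · simp only [Fin.append_left]; exact mul_nonneg hc1nn (hl1nn b)
        · simp only [Fin.append_right]; exact mul_nonneg hc2nn (hl2nn b)
      · rw [Fin.sum_univ_add]
        simp only [Fin.append_left, Fin.append_right, ← Finset.mul_sum]
        rw [hl1sum, hl2sum, mul_one, mul_one, hc12]
      · intro i
        rw [Fin.sum_univ_add]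
        simp only [Fin.append_left, Fin.append_right]
        have e1 : ∑ a : Fin k1, c1 * lam1 a * u1 a i = c1 * vp i := by
          rw [← hcomb1 i, Finset.mul_sum]
          exact Finset.sum_congr rfl (fun a _ => by ring)
        have e2 : ∑ a : Fin k2, c2 * lam2 a * u2 a i = c2 * vm i := by
          rw [← hcomb2 i, Finset.mul_sum]
          exact Finset.sum_congr rfl (fun a _ => by ring)
        rw [e1, e2]
        by_cases hij : i = j
        · subst hij; rw [hvpj, hvmj, hc1def, hc2def]; field_simp; ring
        · by_cases hik : i = k
          · subst hik; rw [hvpk, hvmk, hc1def, hc2def]; field_simp; ring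
          · rw [hvpo i hij hik, hvmo i hij hik]
            have : c1 * v i + c2 * v i = (c1 + c2) * v i := by ring
            rw [this, hc12, one_mul]
      · intro a
        refine Fin.addCases (fun b => ?_) (fun b => ?_) a
        · simp only [Fin.append_left]; exact hsp1 b
        · simp only [Fin.append_right]; exact hsp2 b
      · intro a
        refine Fin.addCases (fun b => ?_) (fun b => ?_) a <;> intro i
        · simp only [Fin.append_left]; exact hu1nn b i
        · simp only [Fin.append_right]; exact hu2nn b i
      · intro a
        refine Fin.addCases (fun b => ?_) (fun b => ?_) a <;> intro i
        · simp only [Fin.append_left]; exact hu1ub b i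
        · simp only [Fin.append_right]; exact hu2ub b i
      · intro a
        have hvz : ∀ i, v i = 0 → vp i = 0 ∧ vm i = 0 := by
          intro i hi
          have hij : i ≠ j := by rintro rfl; exact hjv.1 hi
          have hik : i ≠ k := by rintro rfl; exact hkv.1 hi
          rw [hvpo i hij hik, hvmo i hij hik]; exact ⟨hi, hi⟩
        refine Fin.addCases (fun b => ?_) (fun b => ?_) a <;> intro i hi
        · simp only [Fin.append_left]; exact hu1supp b i (hvz i hi).1
        · simp only [Fin.append_right]; exact hu2supp b i (hvz i hi).2

open Finset in
lemma polytope {n : ℕ} (s : ℕ) (α : ℝ) (hα : 0 < α) (v : Fin n → ℝ)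
    (h1 : ∀ i, |v i| ≤ α) (hsum : ∑ i, |v i| ≤ s * α) :
    ∃ (k : ℕ) (lam : Fin k → ℝ) (u : Fin k → Fin n → ℝ),
      (∀ j, 0 ≤ lam j) ∧ (∑ j, lam j) = 1 ∧
      (∀ i, ∑ j, lam j * u j i = v i) ∧
      (∀ j, Sparse s (u j)) ∧ (∀ j i, |u j i| ≤ α) ∧
      (∀ j i, v i = 0 → u j i = 0) := by
  obtain ⟨k, lam, u0, hnn, hsum1, hcomb, hsp, hu0nn, hub, hsupp⟩ :=
    polytope_nonneg s α hα _ (fun i => |v i|) (fun i => abs_nonneg _) h1 hsum le_rfl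
  set sgn : Fin n → ℝ := fun i => if v i < 0 then -1 else 1 with hsgn
  have hsgnabs : ∀ i, |sgn i| = 1 := by
    intro i; by_cases h : v i < 0 <;> simp [hsgn, h]
  have hsgnv : ∀ i, sgn i * |v i| = v i := by
    intro i
    by_cases h : v i < 0
    · simp [hsgn, h, abs_of_neg h]
    · simp [hsgn, h, abs_of_nonneg (not_lt.mp h)]
  refine ⟨k, lam, fun j i => sgn i * u0 j i, hnn, hsum1, ?_, ?_, ?_, ?_⟩
  · intro i
    have e : ∑ j, lam j * (sgn i * u0 j i) = sgn i * ∑ j, lam j * u0 j i := by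
      rw [Finset.mul_sum]; exact Finset.sum_congr rfl (fun a _ => by ring)
    rw [e, hcomb i, hsgnv]
  · intro j
    obtain ⟨S, hS, hz⟩ := hsp j
    exact ⟨S, hS, fun i hi => by simp only; rw [hz i hi, mul_zero]⟩
  · intro j i
    simp only [abs_mul, hsgnabs i, one_mul]
    rw [abs_of_nonneg (hu0nn j i)]
    exact hub j i
  · intro j i hi
    simp only
    rw [hsupp j i (by rw [hi, abs_zero]), mul_zero]

open Finset in
lemma ker_l1 {N m : ℕ} (s : ℕ) (M : Matrix (Fin m) (Fin N) ℝ)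
    (δ : ℝ) (hδ0 : 0 < δ) (hδ : δ < 1 / Real.sqrt 2)
    (hRIP : ∀ z : Fin N → ℝ, Sparse (2 * s) z →
      (1 - δ) * sq2 z ≤ sq2 (M.mulVec z) ∧ sq2 (M.mulVec z) ≤ (1 + δ) * sq2 z)
    (v : Fin N → ℝ) (hv : M.mulVec v = 0)
    (S₀ : Finset (Fin N)) (hS₀ : S₀.card ≤ s)
    (hbal : ∑ i ∈ S₀ᶜ, |v i| ≤ ∑ i ∈ S₀, |v i|) : v = 0 := by
  have hsqrt2 : (0:ℝ) < Real.sqrt 2 := Real.sqrt_pos.mpr (by norm_num)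
  have h1sqrt : (1:ℝ) ≤ Real.sqrt 2 := by
    rw [show (1:ℝ) = Real.sqrt 1 from (Real.sqrt_one).symm]
    exact Real.sqrt_le_sqrt (by norm_num)
  have hδ1 : δ < 1 := lt_of_lt_of_le hδ (by rw [div_le_one hsqrt2]; exact h1sqrt)
  have hδsq : δ^2 < 1/2 := by
    have h2 : δ^2 < (1 / Real.sqrt 2)^2 := by
      apply pow_lt_pow_left₀ hδ hδ0.le
      norm_num
    rwa [div_pow, one_pow, Real.sq_sqrt (by norm_num : (0:ℝ) ≤ 2)] at h2
  have vzero_of_l1 : (∑ i, |v i|) ≤ 0 → v = 0 := by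
    intro hle
    funext i
    have h2 : ∀ i ∈ univ, (0:ℝ) ≤ |v i| := fun i _ => abs_nonneg _
    have := (Finset.sum_eq_zero_iff_of_nonneg h2).mp
      (le_antisymm hle (Finset.sum_nonneg h2)) i (mem_univ i)
    exact abs_eq_zero.mp this
  by_cases hs0 : s = 0
  · subst hs0
    have hS0e : S₀ = ∅ := card_eq_zero.mp (Nat.le_zero.mp hS₀)
    rw [hS0e] at hbal
    apply vzero_of_l1
    simpa [Finset.compl_empty] using hbal
  by_cases hN : N ≤ 2 * s
  · have hsp : Sparse (2*s) v :=
      ⟨univ, by simpa [Finset.card_univ] using hN, fun i hi => absurd (mem_univ i) hi⟩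
    have hlow := (hRIP v hsp).1
    rw [hv] at hlow
    have h0 : sq2 (0 : Fin m → ℝ) = 0 := by simp [sq2]
    rw [h0] at hlow
    exact sq2_eq_zero (by nlinarith [sq2_nonneg v])
  push_neg at hN
  have hs1 : 1 ≤ s := Nat.pos_of_ne_zero hs0
  have hsN : s ≤ N := by omega
  have hPne : (Finset.powersetCard s (univ : Finset (Fin N))).Nonempty := by
    rw [Finset.powersetCard_nonempty]
    simpa [Finset.card_univ] using hsN
  obtain ⟨S, hSmem, hSmax⟩ := Finset.exists_max_image _ (fun T => ∑ i ∈ T, |v i|) hPne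
  have hScard : S.card = s := (Finset.mem_powersetCard.mp hSmem).2
  have hmaxT : ∀ T : Finset (Fin N), T.card ≤ s → ∑ i ∈ T, |v i| ≤ ∑ i ∈ S, |v i| := by
    intro T hT
    obtain ⟨T', hTT', _, hT'card⟩ :=
      Finset.exists_subsuperset_card_eq (subset_univ T) hT (by simpa [Finset.card_univ] using hsN)
    calc ∑ i ∈ T, |v i| ≤ ∑ i ∈ T', |v i| :=
          Finset.sum_le_sum_of_subset_of_nonneg hTT' (fun _ _ _ => abs_nonneg _)
      _ ≤ _ := hSmax T' (Finset.mem_powersetCard.mpr ⟨subset_univ _, hT'card⟩)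
  have hbalS : ∑ i ∈ Sᶜ, |v i| ≤ ∑ i ∈ S, |v i| := by
    have h1 := Finset.sum_add_sum_compl S₀ (fun i => |v i|)
    have h2 := Finset.sum_add_sum_compl S (fun i => |v i|)
    have h3 := hmaxT S₀ hS₀
    linarith
  by_cases hα : ∑ i ∈ S, |v i| ≤ 0
  · apply vzero_of_l1
    have h2 := Finset.sum_add_sum_compl S (fun i => |v i|)
    linarith
  push_neg at hα
  exfalso
  set σ := ∑ i ∈ S, |v i| with hσ
  have hspos : (0:ℝ) < s := by exact_mod_cast Nat.pos_of_ne_zero hs0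
  set α : ℝ := σ / s with hαdef
  have hαpos : 0 < α := div_pos hα hspos
  have hsα : (s:ℝ) * α = σ := by rw [hαdef]; field_simp
  have hK : ∀ jj, jj ∉ S → |v jj| ≤ α := by
    intro jj hjj
    have hSne : S.Nonempty := by rw [← card_pos, hScard]; omega
    obtain ⟨i0, hi0S, hi0min⟩ := Finset.exists_min_image S (fun i => |v i|) hSne
    have hle : |v jj| ≤ |v i0| := by
      by_contra hgt
      push_neg at hgt
      have hjj' : jj ∉ S.erase i0 := fun hh => hjj (Finset.erase_subset _ _ hh)
      have hcardS' : (insert jj (S.erase i0)).card ≤ s := by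
        rw [Finset.card_insert_of_notMem hjj', Finset.card_erase_of_mem hi0S, hScard]
        omega
      have hsum' := hmaxT _ hcardS'
      rw [Finset.sum_insert hjj'] at hsum'
      have he : |v i0| + ∑ i ∈ S.erase i0, |v i| = σ := by
        rw [hσ]; exact Finset.add_sum_erase S (fun i => |v i|) hi0S
      linarith
    have hmin : (s : ℝ) * |v i0| ≤ σ := by
      have : (S.card : ℝ) * |v i0| ≤ σ := by
        rw [hσ]
        calc (S.card : ℝ) * |v i0| = ∑ _i ∈ S, |v i0| := by rw [Finset.sum_const, nsmul_eq_mul]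
          _ ≤ ∑ i ∈ S, |v i| := Finset.sum_le_sum (fun i hi => hi0min i hi)
      rwa [hScard] at this
    rw [hαdef, le_div_iff₀ hspos]
    nlinarith

  set x : Fin N → ℝ := fun i => if i ∈ S then v i else 0 with hx
  set w : Fin N → ℝ := fun i => if i ∈ S then 0 else v i with hw
  have hvxw : ∀ i, v i = x i + w i := by
    intro i; by_cases h : i ∈ S <;> simp [hx, hw, h]
  have hwabs : ∀ i, |w i| ≤ α := by
    intro i; by_cases h : i ∈ S
    · simp only [hw, if_pos h, abs_zero]; exact hαpos.le
    · simp only [hw, if_neg h]; exact hK i h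
  have hwsum : ∑ i, |w i| ≤ s * α := by
    rw [hsα]
    have e : ∑ i, |w i| = ∑ i ∈ Sᶜ, |v i| := by
      rw [← Finset.sum_add_sum_compl S (fun i => |w i|)]
      have e1 : ∑ i ∈ S, |w i| = 0 :=
        Finset.sum_eq_zero (fun i hi => by simp [hw, hi])
      have e2 : ∑ i ∈ Sᶜ, |w i| = ∑ i ∈ Sᶜ, |v i| :=
        Finset.sum_congr rfl (fun i hi => by simp [hw, Finset.mem_compl.mp hi])
      rw [e1, e2, zero_add]
    rw [e]; exact hbalS
  obtain ⟨kk, lam, u, hlnn, hlsum, hcomb, hsp, huub, husupp⟩ := polytope s α hαpos w hwabs hwsum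
  set X := sq2 x with hXdef
  have hXsum : X = ∑ i ∈ S, v i ^ 2 := by
    rw [hXdef, sq2, ← Finset.sum_add_sum_compl S (fun i => x i ^ 2)]
    have e1 : ∑ i ∈ S, x i ^ 2 = ∑ i ∈ S, v i ^ 2 :=
      Finset.sum_congr rfl (fun i hi => by simp [hx, hi])
    have e2 : ∑ i ∈ Sᶜ, x i ^ 2 = 0 :=
      Finset.sum_eq_zero (fun i hi => by simp [hx, Finset.mem_compl.mp hi])
    rw [e1, e2, add_zero]
  have hCS : σ^2 ≤ (s:ℝ) * X := by
    have h2 := Finset.sum_mul_sq_le_sq_mul_sq S (fun _ => (1:ℝ)) (fun i => |v i|)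
    simp only [one_mul, one_pow, Finset.sum_const, nsmul_eq_mul, mul_one] at h2
    rw [hScard] at h2
    have e : ∀ i ∈ S, |v i| ^ 2 = v i ^ 2 := fun i _ => sq_abs _
    rw [Finset.sum_congr rfl e, ← hXsum] at h2
    exact h2
  have hXpos : 0 < X := by nlinarith
  have hsαX : (s:ℝ) * α^2 ≤ X := by
    have : ((s:ℝ) * α)^2 ≤ (s:ℝ) * X := by rw [hsα]; exact hCS
    nlinarith
  -- u j facts
  have hU_le_X : ∀ j, sq2 (u j) ≤ X := by
    intro j
    obtain ⟨T, hTcard, hTz⟩ := hsp j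
    have hl1 : ∑ i, |u j i| ≤ (s:ℝ) * α := by
      have e : ∑ i, |u j i| = ∑ i ∈ T, |u j i| := by
        rw [← Finset.sum_add_sum_compl T (fun i => |u j i|)]
        have : ∑ i ∈ Tᶜ, |u j i| = 0 :=
          Finset.sum_eq_zero (fun i hi => by rw [hTz i (Finset.mem_compl.mp hi), abs_zero])
        rw [this, add_zero]
      rw [e]
      calc ∑ i ∈ T, |u j i| ≤ ∑ _i ∈ T, α := Finset.sum_le_sum (fun i _ => huub j i)
        _ = (T.card : ℝ) * α := by rw [Finset.sum_const, nsmul_eq_mul]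
        _ ≤ (s:ℝ) * α := by
            have : (T.card:ℝ) ≤ (s:ℝ) := by exact_mod_cast hTcard
            nlinarith
    have hsq : sq2 (u j) ≤ α * ∑ i, |u j i| := by
      rw [sq2, Finset.mul_sum]
      refine Finset.sum_le_sum (fun i _ => ?_)
      have e : u j i ^ 2 = |u j i| * |u j i| := by rw [← abs_mul, abs_of_nonneg (mul_self_nonneg _), sq]
      rw [e]
      exact mul_le_mul_of_nonneg_right (huub j i) (abs_nonneg _)
    calc sq2 (u j) ≤ α * ((s:ℝ)*α) := hsq.trans (mul_le_mul_of_nonneg_left hl1 hαpos.le)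
      _ = (s:ℝ) * α^2 := by ring
      _ ≤ X := hsαX
  -- supports
  have hxz : ∀ i, i ∉ S → x i = 0 := fun i hi => by simp [hx, hi]
  have huz : ∀ j i, i ∈ S → u j i = 0 := by
    intro j i hi
    exact husupp j i (by simp [hw, hi])
  have hcross : ∀ j, ∑ i, x i * u j i = 0 := by
    intro j
    refine Finset.sum_eq_zero (fun i _ => ?_)
    by_cases h : i ∈ S
    · rw [huz j i h, mul_zero]
    · rw [hxz i h, zero_mul]
  -- RIP quadratic bounds
  set a : Fin m → ℝ := M.mulVec x with ha
  set A := sq2 a with hAdef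
  have hAnn : 0 ≤ A := sq2_nonneg a
  set b : Fin kk → Fin m → ℝ := fun j => M.mulVec (u j) with hb
  set B : Fin kk → ℝ := fun j => sq2 (b j) with hB
  set cc : Fin kk → ℝ := fun j => ∑ r, a r * b j r with hcc
  have hquad : ∀ j, ∀ p q : ℝ,
      (1 - δ) * (p^2 * X + q^2 * sq2 (u j)) ≤ p^2*A + 2*p*q*(cc j) + q^2 * B j ∧
      p^2*A + 2*p*q*(cc j) + q^2 * B j ≤ (1 + δ) * (p^2 * X + q^2 * sq2 (u j)) := by
    intro j p q
    obtain ⟨T, hTcard, hTz⟩ := hsp j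
    have hzsp : Sparse (2*s) (fun i => p * x i + q * u j i) := by
      refine ⟨S ∪ T, ?_, fun i hi => ?_⟩
      · calc (S ∪ T).card ≤ S.card + T.card := Finset.card_union_le _ _
          _ ≤ 2 * s := by omega
      · rw [Finset.mem_union] at hi
        push_neg at hi
        show p * x i + q * u j i = 0
        rw [hxz i hi.1, hTz i hi.2, mul_zero, mul_zero, add_zero]
    have hz2 : sq2 (fun i => p * x i + q * u j i) = p^2 * X + q^2 * sq2 (u j) := by
      rw [sq2_expand, hcross j]
      ring
    have hMz : sq2 (M.mulVec (fun i => p * x i + q * u j i))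
        = p^2*A + 2*p*q*(cc j) + q^2 * B j := by
      have e := mulVec_comb M p q x (u j)
      rw [e, sq2_expand]
    have := hRIP _ hzsp
    rw [hz2, hMz] at this
    exact this
  have hxsp : Sparse (2*s) x := ⟨S, by omega, fun i hi => hxz i hi⟩
  have hAX := hRIP x hxsp
  rw [← ha, ← hAdef, ← hXdef] at hAX
  set P : ℝ := (1+δ)*X - A with hP
  set Q : ℝ := A - (1-δ)*X with hQ
  have hp0 : 0 ≤ P := by rw [hP]; linarith [hAX.2]
  have hq0 : 0 ≤ Q := by rw [hQ]; linarith [hAX.1]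
  have hPQ : P + Q = 2*δ*X := by rw [hP, hQ]; ring
  have hkey : ∀ j, (cc j)^2 ≤ P * Q := by
    intro j
    have hd1 : (cc j)^2 ≤ P * ((1+δ) * sq2 (u j) - B j) := by
      have H : ∀ p q : ℝ, 0 ≤ P*p^2 + 2*(-(cc j))*p*q + ((1+δ) * sq2 (u j) - B j)*q^2 := by
        intro p q
        have h2 := (hquad j p q).2
        rw [hP]
        nlinarith [h2]
      have h3 := quad_disc H
      rwa [neg_pow, show ((-1:ℝ))^2 = 1 by norm_num, one_mul] at h3
    have hd2 : (cc j)^2 ≤ Q * (B j - (1-δ) * sq2 (u j)) := by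
      have H : ∀ p q : ℝ, 0 ≤ Q*p^2 + 2*(cc j)*p*q + (B j - (1-δ) * sq2 (u j))*q^2 := by
        intro p q
        have h2 := (hquad j p q).1
        rw [hQ]
        nlinarith [h2]
      exact quad_disc H
    have hsum2 : (cc j)^2 * (P + Q) ≤ P * Q * (2*δ*sq2 (u j)) := by
      have e1 : (cc j)^2 * Q ≤ (P * ((1+δ) * sq2 (u j) - B j)) * Q :=
        mul_le_mul_of_nonneg_right hd1 hq0
      have e2 : (cc j)^2 * P ≤ (Q * (B j - (1-δ) * sq2 (u j))) * P :=
        mul_le_mul_of_nonneg_right hd2 hp0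
      nlinarith [e1, e2]
    rw [hPQ] at hsum2
    have hUX := hU_le_X j
    have hPQnn : 0 ≤ P * Q := mul_nonneg hp0 hq0
    have h2δX : (cc j)^2 * (2*δ*X) ≤ P*Q*(2*δ*X) := by
      have e3 := mul_le_mul_of_nonneg_left hUX (mul_nonneg hPQnn (by linarith : (0:ℝ) ≤ 2*δ))
      nlinarith [hsum2, e3]
    have hpos : 0 < 2*δ*X := by positivity
    exact le_of_mul_le_mul_right h2δX hpos
  -- A = - ∑ lam j * cc j
  have hMw : ∀ r, M.mulVec w r = ∑ j, lam j * b j r := by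
    intro r
    show ∑ i, M r i * w i = _
    rw [Finset.sum_congr rfl (fun i (_ : i ∈ univ) => by rw [← hcomb i, Finset.mul_sum])]
    rw [Finset.sum_comm]
    refine Finset.sum_congr rfl (fun j _ => ?_)
    show ∑ i, M r i * (lam j * u j i) = lam j * ∑ i, M r i * u j i
    rw [Finset.mul_sum]
    exact Finset.sum_congr rfl (fun i _ => by ring)
  have hMwa : ∀ r, M.mulVec w r = - a r := by
    intro r
    have h1 : M.mulVec v r = M.mulVec x r + M.mulVec w r := by
      show ∑ i, M r i * v i = (∑ i, M r i * x i) + ∑ i, M r i * w i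
      rw [← Finset.sum_add_distrib]
      exact Finset.sum_congr rfl (fun i _ => by rw [hvxw i]; ring)
    rw [hv] at h1
    have : (0 : Fin m → ℝ) r = 0 := rfl
    rw [this] at h1
    rw [ha]
    linarith
  have hAcc : ∑ j, lam j * cc j = -A := by
    have e1 : ∀ j, lam j * cc j = ∑ r, a r * (lam j * b j r) := by
      intro j
      rw [hcc]
      show lam j * ∑ r, a r * b j r = _
      rw [Finset.mul_sum]
      exact Finset.sum_congr rfl (fun r _ => by ring)
    rw [Finset.sum_congr rfl (fun j (_ : j ∈ univ) => e1 j), Finset.sum_comm]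
    have e2 : ∀ r, ∑ j, a r * (lam j * b j r) = a r * M.mulVec w r := by
      intro r
      rw [hMw r, Finset.mul_sum]
    rw [Finset.sum_congr rfl (fun r (_ : r ∈ univ) => e2 r)]
    have e3 : ∀ r, a r * M.mulVec w r = -(a r ^2) := by
      intro r
      rw [hMwa r]
      ring
    rw [Finset.sum_congr rfl (fun r (_ : r ∈ univ) => e3 r), Finset.sum_neg_distrib]
    rw [hAdef, sq2]
  have hAle : A ≤ Real.sqrt (P * Q) := by
    have hPQnn : 0 ≤ P * Q := mul_nonneg hp0 hq0
    have h1 : ∀ j, |cc j| ≤ Real.sqrt (P * Q) := by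
      intro j
      rw [← Real.sqrt_sq_eq_abs]
      exact Real.sqrt_le_sqrt (hkey j)
    calc A = ∑ j, lam j * (- cc j) := by
            have e4 : ∑ j, lam j * (-cc j) = -∑ j, lam j * cc j := by
              rw [← Finset.sum_neg_distrib]
              exact Finset.sum_congr rfl (fun j _ => by ring)
            rw [e4, hAcc, neg_neg]
      _ ≤ ∑ j, lam j * Real.sqrt (P * Q) := by
            refine Finset.sum_le_sum (fun j _ => ?_)
            exact mul_le_mul_of_nonneg_left ((neg_le_abs _).trans (h1 j)) (hlnn j)
      _ = Real.sqrt (P * Q) := by rw [← Finset.sum_mul, hlsum, one_mul]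
  have hA2 : A^2 ≤ P * Q := by
    have hPQnn : 0 ≤ P * Q := mul_nonneg hp0 hq0
    have := pow_le_pow_left₀ hAnn hAle 2
    rwa [Real.sq_sqrt hPQnn] at this
  rw [hP, hQ] at hA2
  nlinarith [hA2, sq_nonneg (2*A - X), mul_pos hXpos hXpos, hδsq, hXpos]

/-- If `f ≥ 0`, `h = c² • L f` is `s`-sparse, `L` is injective, all `c i ≠ 0`, and `M`
satisfies the RIP of order `2s` with constant `δ < 1/√2`, then `(f, h)` is the unique
solution of the joint reconstruction problem with exact data `(M f, M h)`. -/
theorem joint_reconstruction_unique_solution_RIP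
    {N m : ℕ} (s : ℕ) (M : Matrix (Fin m) (Fin N) ℝ)
    (L : (Fin N → ℝ) →ₗ[ℝ] (Fin N → ℝ)) (hL : Function.Injective L)
    (c : Fin N → ℝ) (hc : ∀ i, c i ≠ 0)
    (f : Fin N → ℝ) (hf : ∀ i, 0 ≤ f i)
    (h : Fin N → ℝ) (hh : ∀ i, h i = c i ^ 2 * L f i)
    (hsparse : Sparse s h)
    (δ : ℝ) (hδ0 : 0 < δ) (hδ : δ < 1 / Real.sqrt 2)
    (hRIP : ∀ z : Fin N → ℝ, Sparse (2 * s) z →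
      (1 - δ) * sq2 z ≤ sq2 (M.mulVec z) ∧ sq2 (M.mulVec z) ≤ (1 + δ) * sq2 z)
    (y : Fin m → ℝ) (hy : y = M.mulVec f)
    (y'' : Fin m → ℝ) (hy'' : y'' = M.mulVec h) :
    Feasible M L c y y'' f h ∧
      ∀ f' h' : Fin N → ℝ, Feasible M L c y y'' f' h' → l1 h' ≤ l1 h →
        f' = f ∧ h' = h := by
  constructor
  · exact ⟨hf, hy.symm, hy''.symm, fun i => (hh i).symm⟩
  · intro f' h' hfeas hl1
    obtain ⟨hf'nn, hMf', hMh', hch'⟩ := hfeas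
    obtain ⟨S₀, hS₀card, hS₀z⟩ := hsparse
    set v : Fin N → ℝ := fun i => h' i - h i with hvdef
    have hMv : M.mulVec v = 0 := by
      have e : M.mulVec v = fun r => M.mulVec h' r - M.mulVec h r := by
        funext r
        show ∑ i, M r i * (h' i - h i) = (∑ i, M r i * h' i) - ∑ i, M r i * h i
        rw [← Finset.sum_sub_distrib]
        exact Finset.sum_congr rfl (fun i _ => by ring)
      rw [e, hMh', hy'']
      funext r
      simp
    have hbal : ∑ i ∈ S₀ᶜ, |v i| ≤ ∑ i ∈ S₀, |v i| := by
      have e1 : ∀ i ∈ S₀ᶜ, |h' i| = |v i| := by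
        intro i hi
        rw [hvdef]
        simp only
        rw [hS₀z i (Finset.mem_compl.mp hi), sub_zero]
      have e2 : ∀ i ∈ S₀, |h i| - |v i| ≤ |h' i| := by
        intro i _
        have e3 : |h i| - |h' i| ≤ |h i - h' i| := abs_sub_abs_le_abs_sub _ _
        have e4 : |h i - h' i| = |v i| := by
          rw [hvdef]
          simp only
          rw [abs_sub_comm]
        linarith
      have hA := Finset.sum_add_sum_compl S₀ (fun i => |h' i|)
      have hB := Finset.sum_add_sum_compl S₀ (fun i => |h i|)
      have hBc : ∑ i ∈ S₀ᶜ, |h i| = 0 :=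
        Finset.sum_eq_zero fun i hi => by rw [hS₀z i (Finset.mem_compl.mp hi), abs_zero]
      have hsum2 : ∑ i ∈ S₀, (|h i| - |v i|) ≤ ∑ i ∈ S₀, |h' i| := Finset.sum_le_sum e2
      rw [Finset.sum_sub_distrib] at hsum2
      have hcS : ∑ i ∈ S₀ᶜ, |h' i| = ∑ i ∈ S₀ᶜ, |v i| := Finset.sum_congr rfl e1
      have hl1' : ∑ i, |h' i| ≤ ∑ i, |h i| := hl1
      linarith
    have hv0 : v = 0 := ker_l1 s M δ hδ0 hδ hRIP v hMv S₀ hS₀card hbal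
    have hh' : h' = h := by
      funext i
      have e := congrFun hv0 i
      rw [hvdef] at e
      simp only [Pi.zero_apply] at e
      linarith [e]
    have hff : f' = f := by
      apply hL
      funext i
      have h1 : c i ^ 2 * L f' i = c i ^ 2 * L f i := by
        rw [hch' i, hh', ← hh i]
      exact mul_left_cancel₀ (pow_ne_zero 2 (hc i)) h1
    exact ⟨hff, hh'⟩
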